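/- arXiv:1303.3697 — 3 statements merged into one kernel-verified Lean document; each statement's English description precedes it below -/
import Mathlib

section
/- Let I ⊆ ℝ be an open invex set with respect to η : I × I → ℝ₊, let f : I → ℝ be differentiable, a, b ∈ I with η(b,a) ≠ 0, and let q > 1 with p = q/(q−1). If |f'|^q is preinvex on I, then |(1/6)[f(a) + 4f(a + η(b,a)/2) + f(a + η(b,a))] − (1/η(b,a)) ∫_a^{a+η(b,a)} f(x) dx| ≤ η(b,a)·((1 + 2^{p+1})/(6^{p+1}(p+1)))^{1/p} · [ ((3/8)|f'(a)|^q + (1/8)|f'(b)|^q)^{1/q} + ((1/8)|f'(a)|^q + (3/8)|f'(b)|^q)^{1/q} ]. -/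
/-!
Rescale to `g t = f (a + t η(b,a)) / η(b,a)` on `[0, 1]`, whose derivative is `f' (a + t η(b,a))`.
Integrating by parts against the Simpson kernel (`t - 1/6` on `[0, 1/2]`, `t - 5/6` on `[1/2, 1]`)
writes the Simpson error as `∫ kernel · g'`. Hölder's inequality on each half bounds it by
`(∫ |kernel|^p)^(1/p) (∫ |g'|^q)^(1/q)`; the first factor is computed exactly, and preinvexity of
`|f'|^q` along the segment from `a` to `a + η(b,a)` bounds `|g' t|^q` by `(1 - t) |f' a|^q + t |f' b|^q`,
whose integrals over the two halves give the weights `3/8, 1/8` and `1/8, 3/8`.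
-/

open Real MeasureTheory intervalIntegral Set

lemma memLp_restrict_Ioc_of_abs_le {c d M : ℝ} {u : ℝ → ℝ} (r : ENNReal)
    (hu : AEStronglyMeasurable u (volume.restrict (Ioc c d))) (hM : ∀ t ∈ Ioc c d, |u t| ≤ M) :
    MemLp u r (volume.restrict (Ioc c d)) :=
  .of_bound hu M <| (ae_restrict_iff' measurableSet_Ioc).2 <| .of_forall hM

lemma intervalIntegrable_of_abs_le {c d M : ℝ} {u : ℝ → ℝ} (hcd : c ≤ d)
    (hu : AEStronglyMeasurable u (volume.restrict (Ioc c d))) (hM : ∀ t ∈ Ioc c d, |u t| ≤ M) :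
    IntervalIntegrable u volume c d :=
  (intervalIntegrable_iff_integrableOn_Ioc_of_le hcd).2 <|
    memLp_one_iff_integrable.1 (memLp_restrict_Ioc_of_abs_le 1 hu hM)

lemma abs_integral_mul_le_Lp_mul_Lq_of_abs_le {c d p q M N : ℝ} (hcd : c ≤ d)
    (hpq : p.HolderConjugate q) {u v : ℝ → ℝ}
    (hu : AEStronglyMeasurable u (volume.restrict (Ioc c d)))
    (hv : AEStronglyMeasurable v (volume.restrict (Ioc c d)))
    (huM : ∀ t ∈ Ioc c d, |u t| ≤ M) (hvN : ∀ t ∈ Ioc c d, |v t| ≤ N) :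
    |∫ t in c..d, u t * v t| ≤
      (∫ t in c..d, |u t| ^ p) ^ (1 / p) * (∫ t in c..d, |v t| ^ q) ^ (1 / q) := by
  refine (abs_integral_le_integral_abs hcd).trans ?_
  simp only [integral_of_le hcd, abs_mul]
  simpa only [Real.norm_eq_abs] using integral_mul_norm_le_Lp_mul_Lq hpq
    (memLp_restrict_Ioc_of_abs_le _ hu huM) (memLp_restrict_Ioc_of_abs_le _ hv hvN)

lemma integral_abs_sub_rpow {c d e r : ℝ} (hr : 0 ≤ r) (hce : c ≤ e) (hed : e ≤ d) :
    ∫ t in c..d, |t - e| ^ r = ((e - c) ^ (r + 1) + (d - e) ^ (r + 1)) / (r + 1) := by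
  have hr1 : r + 1 ≠ 0 := by positivity
  have hcont : Continuous fun t : ℝ => |t - e| ^ r := by fun_prop (disch := exact Or.inr hr)
  have left : ∫ t in c..e, |t - e| ^ r = ∫ t in c..e, (e - t) ^ r :=
    integral_congr fun t ht => by
      rw [uIcc_of_le hce] at ht
      rw [abs_of_nonpos (by linarith [ht.2]), neg_sub]
  have right : ∫ t in e..d, |t - e| ^ r = ∫ t in e..d, (t - e) ^ r :=
    integral_congr fun t ht => by
      rw [uIcc_of_le hed] at ht
      rw [abs_of_nonneg (by linarith [ht.1])]
  rw [← integral_add_adjacent_intervals (b := e) (hcont.intervalIntegrable _ _)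
    (hcont.intervalIntegrable _ _), left, right, integral_comp_sub_left (· ^ r),
    integral_comp_sub_right (· ^ r), sub_self, integral_rpow (.inl (by linarith)),
    integral_rpow (.inl (by linarith)), zero_rpow hr1]
  ring

lemma integral_affine_interpolation (c d A B : ℝ) :
    ∫ t in c..d, ((1 - t) * A + t * B) = (d - c) * A + (d ^ 2 - c ^ 2) / 2 * (B - A) := by
  have : (fun t : ℝ => (1 - t) * A + t * B) = fun t => A + t * (B - A) := by funext t; ring
  rw [this, integral_add intervalIntegrable_const ((continuous_mul_const _).intervalIntegrable _ _),
    intervalIntegral.integral_const, intervalIntegral.integral_mul_const, integral_id, smul_eq_mul]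

lemma integral_sub_mul_deriv_eq {c d e : ℝ} {g g' : ℝ → ℝ}
    (hg : ∀ t ∈ uIcc c d, HasDerivAt g (g' t) t) (hg' : IntervalIntegrable g' volume c d) :
    ∫ t in c..d, (t - e) * g' t = (d - e) * g d - (c - e) * g c - ∫ t in c..d, g t := by
  simpa using integral_mul_deriv_eq_deriv_mul (fun t _ => (hasDerivAt_id t).sub_const e) hg
    intervalIntegrable_const hg'

lemma simpson_sub_integral_eq {g g' : ℝ → ℝ} (hg : ∀ t ∈ Icc (0 : ℝ) 1, HasDerivAt g (g' t) t)
    (hg' : IntervalIntegrable g' volume 0 1) :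
    1 / 6 * (g 0 + 4 * g (1 / 2) + g 1) - ∫ t in (0 : ℝ)..1, g t =
      (∫ t in (0 : ℝ)..1 / 2, (t - 1 / 6) * g' t) + ∫ t in (1 / 2 : ℝ)..1, (t - 5 / 6) * g' t := by
  rw [← uIcc_of_le zero_le_one] at hg
  have hsub₁ : uIcc (0 : ℝ) (1 / 2) ⊆ uIcc 0 1 := uIcc_subset_uIcc_left (by norm_num)
  have hsub₂ : uIcc (1 / 2 : ℝ) 1 ⊆ uIcc 0 1 := uIcc_subset_uIcc_right (by norm_num)
  have hgc : ContinuousOn g (uIcc 0 1) := fun t ht => (hg t ht).continuousAt.continuousWithinAt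
  rw [integral_sub_mul_deriv_eq (fun t ht => hg t (hsub₁ ht)) (hg'.mono_set hsub₁),
    integral_sub_mul_deriv_eq (fun t ht => hg t (hsub₂ ht)) (hg'.mono_set hsub₂),
    ← integral_add_adjacent_intervals (b := 1 / 2) (hgc.mono hsub₁).intervalIntegrable
      (hgc.mono hsub₂).intervalIntegrable]
  ring

lemma sixth_rpow_add_third_rpow (r : ℝ) :
    (1 / 6 : ℝ) ^ r + (1 / 3) ^ r = (1 + 2 ^ r) / 6 ^ r := by
  rw [show (1 / 3 : ℝ) = 2 / 6 by norm_num, div_rpow zero_le_one (by norm_num),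
    div_rpow zero_le_two (by norm_num), one_rpow, add_div]

section PreinvexBound

variable {p q A B : ℝ} {g' : ℝ → ℝ}

lemma rpow_abs_le_of_le_affine (hbound : ∀ t ∈ Icc (0 : ℝ) 1, |g' t| ^ q ≤ (1 - t) * A + t * B)
    {t : ℝ} (ht : t ∈ Icc (0 : ℝ) 1) : |g' t| ^ q ≤ |A| + |B| := by
  have := hbound t ht
  nlinarith [ht.1, ht.2, le_abs_self A, le_abs_self B, abs_nonneg A, abs_nonneg B]

lemma abs_le_of_rpow_abs_le_affine (hq : 0 < q)
    (hbound : ∀ t ∈ Icc (0 : ℝ) 1, |g' t| ^ q ≤ (1 - t) * A + t * B)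
    {t : ℝ} (ht : t ∈ Icc (0 : ℝ) 1) : |g' t| ≤ (|A| + |B|) ^ q⁻¹ :=
  (le_rpow_inv_iff_of_pos (abs_nonneg _) (by positivity) hq).2 (rpow_abs_le_of_le_affine hbound ht)

lemma abs_integral_sub_mul_le (hpq : p.HolderConjugate q) (hg'm : Measurable g')
    (hbound : ∀ t ∈ Icc (0 : ℝ) 1, |g' t| ^ q ≤ (1 - t) * A + t * B)
    {c d : ℝ} (hc : 0 ≤ c) (hcd : c ≤ d) (hd : d ≤ 1) (e : ℝ) :
    |∫ t in c..d, (t - e) * g' t| ≤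
      (∫ t in c..d, |t - e| ^ p) ^ (1 / p) * (∫ t in c..d, ((1 - t) * A + t * B)) ^ (1 / q) := by
  have hIcc : ∀ t ∈ Ioc c d, t ∈ Icc (0 : ℝ) 1 := fun t ht => ⟨hc.trans ht.1.le, ht.2.trans hd⟩
  have hg'M : ∀ t ∈ Ioc c d, |g' t| ≤ (|A| + |B|) ^ q⁻¹ := fun t ht =>
    abs_le_of_rpow_abs_le_affine hpq.symm.pos hbound (hIcc t ht)
  have hkernel : ∀ t ∈ Ioc c d, |t - e| ≤ (d - c) + |c - e| := fun t ht => by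
    have htc : |t - c| = t - c := abs_of_nonneg (by linarith [ht.1])
    linarith [abs_sub_le t c e, ht.2]
  refine (abs_integral_mul_le_Lp_mul_Lq_of_abs_le hcd hpq (by fun_prop)
    hg'm.aestronglyMeasurable hkernel hg'M).trans ?_
  refine mul_le_mul_of_nonneg_left (rpow_le_rpow (integral_nonneg hcd fun t _ => by positivity)
    ?_ hpq.symm.one_div_nonneg) (rpow_nonneg (integral_nonneg hcd fun t _ => by positivity) _)
  refine integral_mono_on hcd ?_ ((by fun_prop : Continuous _).intervalIntegrable _ _)
    fun t ht => ?_
  · refine intervalIntegrable_of_abs_le (M := |A| + |B|) hcd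
      (hg'm.abs.pow_const q).aestronglyMeasurable fun t ht => ?_
    rw [abs_of_nonneg (by positivity)]
    exact rpow_abs_le_of_le_affine hbound (hIcc t ht)
  · exact hbound t ⟨hc.trans ht.1, ht.2.trans hd⟩

lemma abs_simpson_sub_integral_le (hpq : p.HolderConjugate q) {g : ℝ → ℝ}
    (hg : ∀ t ∈ Icc (0 : ℝ) 1, HasDerivAt g (g' t) t) (hg'm : Measurable g')
    (hbound : ∀ t ∈ Icc (0 : ℝ) 1, |g' t| ^ q ≤ (1 - t) * A + t * B) :
    |1 / 6 * (g 0 + 4 * g (1 / 2) + g 1) - ∫ t in (0 : ℝ)..1, g t| ≤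
      ((1 + 2 ^ (p + 1)) / (6 ^ (p + 1) * (p + 1))) ^ (1 / p) *
        ((3 / 8 * A + 1 / 8 * B) ^ (1 / q) + (1 / 8 * A + 3 / 8 * B) ^ (1 / q)) := by
  have hp := hpq.pos
  have hg'M : ∀ t ∈ Ioc (0 : ℝ) 1, |g' t| ≤ (|A| + |B|) ^ q⁻¹ := fun t ht =>
    abs_le_of_rpow_abs_le_affine hpq.symm.pos hbound (Ioc_subset_Icc_self ht)
  have hkernel₁ : ∫ t in (0 : ℝ)..1 / 2, |t - 1 / 6| ^ p =
      (1 + 2 ^ (p + 1)) / (6 ^ (p + 1) * (p + 1)) := by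
    rw [integral_abs_sub_rpow hp.le (by norm_num) (by norm_num)]
    norm_num [sixth_rpow_add_third_rpow, div_div]
  have hkernel₂ : ∫ t in (1 / 2 : ℝ)..1, |t - 5 / 6| ^ p =
      (1 + 2 ^ (p + 1)) / (6 ^ (p + 1) * (p + 1)) := by
    rw [integral_abs_sub_rpow hp.le (by norm_num) (by norm_num)]
    norm_num [add_comm ((1 / 3 : ℝ) ^ (p + 1)), sixth_rpow_add_third_rpow, div_div]
  rw [simpson_sub_integral_eq hg (intervalIntegrable_of_abs_le zero_le_one
    hg'm.aestronglyMeasurable hg'M)]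
  calc _ ≤ |∫ t in (0 : ℝ)..1 / 2, (t - 1 / 6) * g' t| +
        |∫ t in (1 / 2 : ℝ)..1, (t - 5 / 6) * g' t| := abs_add_le _ _
    _ ≤ _ := add_le_add
        (abs_integral_sub_mul_le hpq hg'm hbound le_rfl (by norm_num) (by norm_num) _)
        (abs_integral_sub_mul_le hpq hg'm hbound (by norm_num) (by norm_num) le_rfl _)
    _ = _ := by
      rw [hkernel₁, hkernel₂, integral_affine_interpolation, integral_affine_interpolation]
      ring_nf

end PreinvexBound

theorem stmt2 (I : Set ℝ) (η : ℝ → ℝ → ℝ) (f : ℝ → ℝ) (a b : ℝ)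
    (hI : IsOpen I)
    (hinv : ∀ u ∈ I, ∀ v ∈ I, ∀ t ∈ Set.Icc (0:ℝ) 1, u + t * η v u ∈ I)
    (hηnn : ∀ u ∈ I, ∀ v ∈ I, 0 ≤ η v u)
    (ha : a ∈ I) (hb : b ∈ I) (hη : η b a ≠ 0)
    (hf : DifferentiableOn ℝ f I)
    (q p : ℝ) (hq : 1 < q) (hp : p = q / (q - 1))
    (hpre : ∀ u ∈ I, ∀ v ∈ I, ∀ t ∈ Set.Icc (0:ℝ) 1,
      |deriv f (u + t * η v u)| ^ q ≤ (1 - t) * |deriv f u| ^ q + t * |deriv f v| ^ q) :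
    |(1/6 : ℝ) * (f a + 4 * f (a + η b a / 2) + f (a + η b a)) -
      (1 / η b a) * ∫ x in a..(a + η b a), f x| ≤ η b a * ((1 + 2 ^ (p + 1)) / (6 ^ (p + 1) * (p + 1))) ^ (1/p) *
      (((3/8) * |deriv f a| ^ q + (1/8) * |deriv f b| ^ q) ^ (1/q) +
       ((1/8) * |deriv f a| ^ q + (3/8) * |deriv f b| ^ q) ^ (1/q)) := by
  set h := η b a
  have hpos : 0 < h := (hηnn a ha b hb).lt_of_ne' hη
  have hpq : p.HolderConjugate q := hp ▸ (HolderConjugate.conjExponent hq).symm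
  set g : ℝ → ℝ := fun t => h⁻¹ * f (a + t * h)
  have hg : ∀ t ∈ Icc (0 : ℝ) 1, HasDerivAt g (deriv f (a + t * h)) t := fun t ht => by
    have hfa := (hf.differentiableAt (hI.mem_nhds (hinv a ha b hb t ht))).hasDerivAt
    refine ((hfa.comp t (((hasDerivAt_id t).mul_const h).const_add a)).const_mul h⁻¹).congr_deriv
      ?_
    rw [one_mul, mul_comm, mul_inv_cancel_right₀ hη]
  have hint : ∫ t in (0 : ℝ)..1, g t = h⁻¹ * (h⁻¹ * ∫ x in a..a + h, f x) := by
    simp only [g, intervalIntegral.integral_const_mul, mul_comm _ h,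
      integral_comp_add_mul f hpos.ne' a]
    simp
  have hscale : |(1/6 : ℝ) * (f a + 4 * f (a + h / 2) + f (a + h)) - 1 / h * ∫ x in a..a + h, f x|
      = h * |1 / 6 * (g 0 + 4 * g (1 / 2) + g 1) - ∫ t in (0 : ℝ)..1, g t| := by
    rw [hint, ← abs_of_pos hpos, ← abs_mul, abs_of_pos hpos]
    congr 1
    simp only [g, zero_mul, add_zero, one_mul, one_div_mul_eq_div]
    field_simp
  rw [hscale, mul_assoc]
  exact mul_le_mul_of_nonneg_left (abs_simpson_sub_integral_le hpq hg
    ((measurable_deriv f).comp (by fun_prop)) (hpre a ha b hb)) hpos.le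
end

section
/- Let I ⊆ ℝ be an open invex set with respect to η : I × I → ℝ₊, let f : I → ℝ be differentiable, a, b ∈ I with η(b,a) ≠ 0, and let q > 1 with p = q/(q−1). If |f'|^q is preinvex on I, then |(1/6)[f(a) + 4f(a + η(b,a)/2) + f(a + η(b,a))] − (1/η(b,a)) ∫_a^{a+η(b,a)} f(x) dx| ≤ η(b,a)·(2(1 + 2^{p+1})/(6^{p+1}(p+1)))^{1/p} · ((|f'(a)|^q + |f'(b)|^q)/2)^{1/q}. -/
/-!
Integration by parts against the Peano kernel of Simpson's rule, `K t = t - 1/6` on `[0, 1/2]`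
and `K t = t - 5/6` on `(1/2, 1]`, writes the Simpson error as
`η b a * ∫₀¹ K t * f' (a + t * η b a) dt`. Hölder's inequality splits this into `‖K‖_p`, which is
computed exactly, and `‖f' (a + · * η b a)‖_q`, where preinvexity bounds `|f'|^q` on the segment by
the chord `(1 - t) |f' a|^q + t |f' b|^q`, whose integral is the mean `(|f' a|^q + |f' b|^q) / 2`.
-/

open Real MeasureTheory intervalIntegral Set

noncomputable def simpsonKernel (t : ℝ) : ℝ := if t ≤ 1 / 2 then t - 1 / 6 else t - 5 / 6

lemma measurable_simpsonKernel : Measurable simpsonKernel :=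
  Measurable.ite (measurableSet_le measurable_id measurable_const) (by fun_prop) (by fun_prop)

lemma abs_simpsonKernel_le_one {t : ℝ} (ht : t ∈ Icc (0 : ℝ) 1) : |simpsonKernel t| ≤ 1 := by
  unfold simpsonKernel
  split_ifs <;> rw [abs_le] <;> constructor <;> linarith [ht.1, ht.2]

lemma simpsonKernel_eqOn_left : EqOn simpsonKernel (· - 1 / 6) (uIoc 0 (1 / 2)) := by
  intro t ht
  rw [uIoc_of_le (by norm_num)] at ht
  exact if_pos ht.2

lemma simpsonKernel_eqOn_right : EqOn simpsonKernel (· - 5 / 6) (uIoc (1 / 2) 1) := by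
  intro t ht
  rw [uIoc_of_le (by norm_num)] at ht
  exact if_neg (not_le.mpr ht.1)

lemma integral_comp_simpsonKernel (φ : ℝ → ℝ → ℝ)
    (hl : IntervalIntegrable (fun t => φ t (t - 1 / 6)) volume 0 (1 / 2))
    (hr : IntervalIntegrable (fun t => φ t (t - 5 / 6)) volume (1 / 2) 1) :
    ∫ t in (0 : ℝ)..1, φ t (simpsonKernel t) =
      (∫ t in (0 : ℝ)..(1 / 2), φ t (t - 1 / 6)) + ∫ t in (1 / 2 : ℝ)..1, φ t (t - 5 / 6) := by
  have el : EqOn (fun t => φ t (simpsonKernel t)) (fun t => φ t (t - 1 / 6)) (uIoc 0 (1 / 2)) :=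
    fun t ht => by simp only [simpsonKernel_eqOn_left ht]
  have er : EqOn (fun t => φ t (simpsonKernel t)) (fun t => φ t (t - 5 / 6)) (uIoc (1 / 2) 1) :=
    fun t ht => by simp only [simpsonKernel_eqOn_right ht]
  rw [← integral_add_adjacent_intervals ((intervalIntegrable_congr el).mpr hl)
      ((intervalIntegrable_congr er).mpr hr),
    integral_congr_ae_restrict ((ae_restrict_mem measurableSet_uIoc).mono el),
    integral_congr_ae_restrict ((ae_restrict_mem measurableSet_uIoc).mono er)]

lemma integral_abs_rpow_of_nonneg {u e : ℝ} (hu : 0 ≤ u) (he : 0 ≤ e) :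
    ∫ s in (0 : ℝ)..u, |s| ^ e = u ^ (e + 1) / (e + 1) := by
  have habs : EqOn (fun s : ℝ => |s| ^ e) (fun s => s ^ e) (uIcc 0 u) := fun s hs => by
    rw [uIcc_of_le hu] at hs
    simp only [abs_of_nonneg hs.1]
  rw [integral_congr habs, integral_rpow (Or.inl (by linarith)), zero_rpow (by linarith), sub_zero]

lemma integral_abs_sub_rpow_s3 {x c y e : ℝ} (hxc : x ≤ c) (hcy : c ≤ y) (he : 0 ≤ e) :
    ∫ t in x..y, |t - c| ^ e = ((c - x) ^ (e + 1) + (y - c) ^ (e + 1)) / (e + 1) := by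
  have hint : ∀ u v : ℝ, IntervalIntegrable (fun s : ℝ => |s| ^ e) volume u v := fun u v =>
    (continuous_abs.rpow_const fun _ => Or.inr he).intervalIntegrable u v
  have hneg : ∫ s in (x - c)..0, |s| ^ e = ∫ s in (0 : ℝ)..(c - x), |s| ^ e := by
    simpa using (integral_comp_neg (a := 0) (b := c - x) fun s => |s| ^ e).symm
  rw [integral_comp_sub_right (fun s => |s| ^ e), ← integral_add_adjacent_intervals (hint _ 0)
    (hint 0 _), hneg, integral_abs_rpow_of_nonneg (by linarith) he,
    integral_abs_rpow_of_nonneg (by linarith) he, add_div]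

lemma integral_abs_simpsonKernel_rpow {p : ℝ} (hp : 0 ≤ p) :
    ∫ t in (0 : ℝ)..1, |simpsonKernel t| ^ p = 2 * (1 + 2 ^ (p + 1)) / (6 ^ (p + 1) * (p + 1)) := by
  have hint : ∀ (c x y : ℝ), IntervalIntegrable (fun t : ℝ => |t - c| ^ p) volume x y :=
    fun c x y => ((continuous_abs.comp (continuous_sub_right c)).rpow_const
      fun _ => Or.inr hp).intervalIntegrable x y
  rw [integral_comp_simpsonKernel (fun _ k => |k| ^ p) (hint _ _ _) (hint _ _ _),
    integral_abs_sub_rpow_s3 (by norm_num) (by norm_num) hp,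
    integral_abs_sub_rpow_s3 (by norm_num) (by norm_num) hp]
  have h6 : ((1 : ℝ) / 6) ^ (p + 1) = 1 / 6 ^ (p + 1) := by
    rw [div_rpow (by norm_num) (by norm_num), one_rpow]
  have h3 : ((1 : ℝ) / 3) ^ (p + 1) = 2 ^ (p + 1) / 6 ^ (p + 1) := by
    rw [show (1 : ℝ) / 3 = 2 / 6 by norm_num, div_rpow (by norm_num) (by norm_num)]
  norm_num [h6, h3]
  field_simp
  ring

lemma integral_simpsonKernel_mul_deriv {v v' : ℝ → ℝ}
    (hv : ∀ t ∈ Icc (0 : ℝ) 1, HasDerivAt v (v' t) t) (hv' : IntervalIntegrable v' volume 0 1) :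
    ∫ t in (0 : ℝ)..1, simpsonKernel t * v' t =
      (v 0 + 4 * v (1 / 2) + v 1) / 6 - ∫ t in (0 : ℝ)..1, v t := by
  have hl : uIcc (0 : ℝ) (1 / 2) ⊆ Icc 0 1 := uIcc_subset_Icc (by norm_num) (by norm_num)
  have hr : uIcc (1 / 2 : ℝ) 1 ⊆ Icc 0 1 := uIcc_subset_Icc (by norm_num) (by norm_num)
  have hv'l : IntervalIntegrable v' volume 0 (1 / 2) := hv'.mono_set (by simpa using hl)
  have hv'r : IntervalIntegrable v' volume (1 / 2) 1 := hv'.mono_set (by simpa using hr)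
  have hvc : ContinuousOn v (Icc 0 1) := fun t ht => (hv t ht).continuousAt.continuousWithinAt
  have ibpl := integral_mul_deriv_eq_deriv_mul (u := (· - 1 / 6)) (u' := fun _ => 1)
    (fun t _ => (hasDerivAt_id t).sub_const _) (fun t ht => hv t (hl ht))
    intervalIntegrable_const hv'l
  have ibpr := integral_mul_deriv_eq_deriv_mul (u := (· - 5 / 6)) (u' := fun _ => 1)
    (fun t _ => (hasDerivAt_id t).sub_const _) (fun t ht => hv t (hr ht))
    intervalIntegrable_const hv'r
  rw [integral_comp_simpsonKernel (fun t k => k * v' t) (hv'l.continuousOn_mul (by fun_prop))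
    (hv'r.continuousOn_mul (by fun_prop)), ibpl, ibpr, ← integral_add_adjacent_intervals
    ((hvc.mono hl).intervalIntegrable) ((hvc.mono hr).intervalIntegrable)]
  simp only [one_mul]
  ring

lemma simpson_sub_average_eq_integral_simpsonKernel {f g : ℝ → ℝ} {a h : ℝ} (hh : h ≠ 0)
    (hf : ∀ t ∈ Icc (0 : ℝ) 1, HasDerivAt f (g t) (a + t * h))
    (hg : IntervalIntegrable g volume 0 1) :
    (1 / 6 : ℝ) * (f a + 4 * f (a + h / 2) + f (a + h)) - (1 / h) * ∫ x in a..(a + h), f x =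
      h * ∫ t in (0 : ℝ)..1, simpsonKernel t * g t := by
  have hv : ∀ t ∈ Icc (0 : ℝ) 1, HasDerivAt (fun t => f (a + h * t)) (h * g t) t := fun t ht => by
    have haffine : HasDerivAt (fun t => a + h * t) h t := by
      simpa using ((hasDerivAt_id t).const_mul h).const_add a
    rw [mul_comm h]
    exact (mul_comm t h ▸ hf t ht).comp t haffine
  have hsubst : ∫ t in (0 : ℝ)..1, f (a + h * t) = (1 / h) * ∫ x in a..(a + h), f x := by
    simp [integral_comp_add_mul f hh]
  have hscale : h * ∫ t in (0 : ℝ)..1, simpsonKernel t * g t =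
      ∫ t in (0 : ℝ)..1, simpsonKernel t * (h * g t) := by
    rw [← intervalIntegral.integral_const_mul]
    congr 1 with t
    ring
  rw [hscale, integral_simpsonKernel_mul_deriv hv (hg.const_mul h), hsubst]
  ring_nf

lemma abs_integral_mul_le_Lp_mul_Lq {f g : ℝ → ℝ} {a b p q : ℝ} (hab : a ≤ b)
    (hpq : p.HolderConjugate q) (hf : MemLp f (ENNReal.ofReal p) (volume.restrict (Ioc a b)))
    (hg : MemLp g (ENNReal.ofReal q) (volume.restrict (Ioc a b))) :
    |∫ x in a..b, f x * g x| ≤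
      (∫ x in a..b, |f x| ^ p) ^ (1 / p) * (∫ x in a..b, |g x| ^ q) ^ (1 / q) := by
  rw [integral_of_le hab, integral_of_le hab, integral_of_le hab]
  calc |∫ x in Ioc a b, f x * g x| ≤ ∫ x in Ioc a b, |f x| * |g x| := by
        simp_rw [← abs_mul]
        exact MeasureTheory.abs_integral_le_integral_abs
    _ ≤ _ := by simpa only [Real.norm_eq_abs] using integral_mul_norm_le_Lp_mul_Lq hpq hf hg

lemma integral_le_of_le_chord {φ : ℝ → ℝ} {A B : ℝ} (hφ : IntervalIntegrable φ volume 0 1)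
    (hchord : ∀ t ∈ Icc (0 : ℝ) 1, φ t ≤ (1 - t) * A + t * B) :
    ∫ t in (0 : ℝ)..1, φ t ≤ (A + B) / 2 := by
  calc ∫ t in (0 : ℝ)..1, φ t ≤ ∫ t in (0 : ℝ)..1, ((1 - t) * A + t * B) :=
        integral_mono_on zero_le_one hφ ((by fun_prop : Continuous _).intervalIntegrable _ _) hchord
    _ = ∫ t in (0 : ℝ)..1, (A + t * (B - A)) := by congr 1 with t; ring
    _ = (A + B) / 2 := by
        rw [integral_add intervalIntegrable_const (intervalIntegrable_id.mul_const _),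
          intervalIntegral.integral_mul_const, integral_id, intervalIntegral.integral_const]
        ring

lemma memLp_top_simpsonKernel : MemLp simpsonKernel ⊤ (volume.restrict (Ioc 0 1)) :=
  memLp_top_of_bound measurable_simpsonKernel.aestronglyMeasurable 1
    (ae_restrict_of_forall_mem measurableSet_Ioc fun _ ht =>
      abs_simpsonKernel_le_one (Ioc_subset_Icc_self ht))

lemma memLp_top_of_rpow_abs_le_chord {g : ℝ → ℝ} {q A B : ℝ} (hq : 0 < q) (hA : 0 ≤ A)
    (hg : AEStronglyMeasurable g (volume.restrict (Ioc 0 1)))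
    (hchord : ∀ t ∈ Icc (0 : ℝ) 1, |g t| ^ q ≤ (1 - t) * A + t * B) :
    MemLp g ⊤ (volume.restrict (Ioc 0 1)) := by
  refine memLp_top_of_bound hg (max A B ^ q⁻¹)
    (ae_restrict_of_forall_mem measurableSet_Ioc fun t ht => ?_)
  have ht : t ∈ Icc (0 : ℝ) 1 := Ioc_subset_Icc_self ht
  refine (le_rpow_inv_iff_of_pos (abs_nonneg _) (le_max_of_le_left hA) hq).mpr
    ((hchord t ht).trans ?_)
  simpa using Convex.combo_le_max A B (sub_nonneg.2 ht.2) ht.1 (by ring)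

lemma abs_integral_mul_le_of_rpow_abs_le_chord {K g : ℝ → ℝ} {p q A B : ℝ}
    (hpq : p.HolderConjugate q) (hK : MemLp K ⊤ (volume.restrict (Ioc 0 1)))
    (hg : MemLp g ⊤ (volume.restrict (Ioc 0 1)))
    (hchord : ∀ t ∈ Icc (0 : ℝ) 1, |g t| ^ q ≤ (1 - t) * A + t * B) :
    |∫ t in (0 : ℝ)..1, K t * g t| ≤
      (∫ t in (0 : ℝ)..1, |K t| ^ p) ^ (1 / p) * ((A + B) / 2) ^ (1 / q) := by
  have hgq : IntervalIntegrable (fun t => |g t| ^ q) volume 0 1 := by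
    have := (hg.mono_exponent (le_top : ENNReal.ofReal q ≤ ⊤)).integrable_norm_rpow'
    rw [ENNReal.toReal_ofReal hpq.symm.nonneg] at this
    exact (intervalIntegrable_iff_integrableOn_Ioc_of_le zero_le_one).mpr this
  refine (abs_integral_mul_le_Lp_mul_Lq zero_le_one hpq (hK.mono_exponent le_top)
    (hg.mono_exponent le_top)).trans ?_
  gcongr
  · exact rpow_nonneg (integral_nonneg zero_le_one fun t _ => by positivity) _
  · exact integral_nonneg zero_le_one fun t _ => by positivity
  · exact one_div_nonneg.mpr hpq.symm.nonneg
  · exact integral_le_of_le_chord hgq hchord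

theorem stmt3 (I : Set ℝ) (η : ℝ → ℝ → ℝ) (f : ℝ → ℝ) (a b : ℝ)
    (hI : IsOpen I)
    (hinv : ∀ u ∈ I, ∀ v ∈ I, ∀ t ∈ Set.Icc (0:ℝ) 1, u + t * η v u ∈ I)
    (hηnn : ∀ u ∈ I, ∀ v ∈ I, 0 ≤ η v u)
    (ha : a ∈ I) (hb : b ∈ I) (hη : η b a ≠ 0)
    (hf : DifferentiableOn ℝ f I)
    (q p : ℝ) (hq : 1 < q) (hp : p = q / (q - 1))
    (hpre : ∀ u ∈ I, ∀ v ∈ I, ∀ t ∈ Set.Icc (0:ℝ) 1,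
      |deriv f (u + t * η v u)| ^ q ≤ (1 - t) * |deriv f u| ^ q + t * |deriv f v| ^ q) :
    |(1/6 : ℝ) * (f a + 4 * f (a + η b a / 2) + f (a + η b a)) -
      (1 / η b a) * ∫ x in a..(a + η b a), f x| ≤ η b a * (2 * (1 + 2 ^ (p + 1)) / (6 ^ (p + 1) * (p + 1))) ^ (1/p) *
      ((|deriv f a| ^ q + |deriv f b| ^ q) / 2) ^ (1/q) := by
  have hpq : p.HolderConjugate q := hp ▸ (HolderConjugate.conjExponent hq).symm
  set h := η b a
  set g := fun t => deriv f (a + t * h)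
  have hh : 0 < h := (hηnn a ha b hb).lt_of_ne' hη
  have hderiv : ∀ t ∈ Icc (0 : ℝ) 1, HasDerivAt f (g t) (a + t * h) := fun t ht =>
    (hf.differentiableAt (hI.mem_nhds (hinv a ha b hb t ht))).hasDerivAt
  have hchord : ∀ t ∈ Icc (0 : ℝ) 1, |g t| ^ q ≤ (1 - t) * |deriv f a| ^ q + t * |deriv f b| ^ q :=
    hpre a ha b hb
  have hg : MemLp g ⊤ (volume.restrict (Ioc 0 1)) :=
    memLp_top_of_rpow_abs_le_chord hpq.symm.pos (by positivity)
      (by fun_prop [measurable_deriv]) hchord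
  have hgint : IntervalIntegrable g volume 0 1 :=
    (intervalIntegrable_iff_integrableOn_Ioc_of_le zero_le_one).mpr (hg.integrable le_top)
  rw [simpson_sub_average_eq_integral_simpsonKernel hh.ne' hderiv hgint, abs_mul,
    abs_of_pos hh, mul_assoc, ← integral_abs_simpsonKernel_rpow hpq.nonneg]
  gcongr
  exact abs_integral_mul_le_of_rpow_abs_le_chord hpq memLp_top_simpsonKernel hg hchord
end

section
/- (Special case η(b,a) = b − a of Theorem 3.1, classical Simpson bound.) Let f : [a,b] → ℝ be differentiable with a < b, and suppose |f'| is convex on [a,b]. Then |(1/6)[f(a) + 4f((a+b)/2) + f(b)] − (1/(b−a)) ∫_a^b f(x) dx| ≤ (5/72)(b−a)(|f'(a)| + |f'(b)|). -/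
/-!
Integrating by parts against the Peano kernel `K x = x - (5a + b)/6` on `[a, (a+b)/2]` and
`K x = x - (a + 5b)/6` on `[(a+b)/2, b]` writes the Simpson error as `(1/(b-a)) ∫ K f'`.
Convexity of `|f'|` bounds it by the chord through `(a, |f' a|)` and `(b, |f' b|)`, and integrating
`|K|` against this affine bound gives `(5/72) (b - a)^2 (|f' a| + |f' b|)`.
-/

open Real MeasureTheory intervalIntegral Set

lemma le_chord_of_forall_convexComb_le {φ : ℝ → ℝ} {a b : ℝ} (hab : a < b)
    (hφ : ∀ t ∈ Icc (0 : ℝ) 1, φ ((1 - t) * a + t * b) ≤ (1 - t) * φ a + t * φ b)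
    {x : ℝ} (hx : x ∈ Icc a b) :
    φ x ≤ ((b - x) * φ a + (x - a) * φ b) / (b - a) := by
  have hba : 0 < b - a := sub_pos.mpr hab
  have ht : (x - a) / (b - a) ∈ Icc (0 : ℝ) 1 :=
    ⟨div_nonneg (by linarith [hx.1]) hba.le, (div_le_one hba).mpr (by linarith [hx.2])⟩
  have hcomb : (1 - (x - a) / (b - a)) * a + (x - a) / (b - a) * b = x := by
    field_simp; ring
  have hle := hφ _ ht
  rw [hcomb] at hle
  exact hle.trans_eq (by field_simp; ring)

lemma intervalIntegrable_of_hasDerivAt_of_abs_le {f f' g : ℝ → ℝ} {a b : ℝ} (hab : a ≤ b)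
    (hf : ∀ x ∈ Icc a b, HasDerivAt f (f' x) x) (hg : ContinuousOn g (Icc a b))
    (hbd : ∀ x ∈ Icc a b, |f' x| ≤ g x) :
    IntervalIntegrable f' volume a b := by
  rw [intervalIntegrable_iff_integrableOn_Icc_of_le hab]
  have hmeas : AEStronglyMeasurable f' (volume.restrict (Icc a b)) :=
    (measurable_deriv f).aestronglyMeasurable.congr <|
      (ae_restrict_mem measurableSet_Icc).mono fun x hx => (hf x hx).deriv
  refine (hg.integrableOn_Icc).mono' hmeas ?_
  filter_upwards [ae_restrict_mem measurableSet_Icc] with x hx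
  simpa using hbd x hx

lemma integral_sub_mul_deriv {f f' : ℝ → ℝ} {p q : ℝ} (c : ℝ)
    (hf : ∀ x ∈ uIcc p q, HasDerivAt f (f' x) x) (hint : IntervalIntegrable f' volume p q) :
    ∫ x in p..q, (x - c) * f' x = (q - c) * f q - (p - c) * f p - ∫ x in p..q, f x := by
  simpa using integral_mul_deriv_eq_deriv_mul (u := fun x => x - c) (u' := fun _ => 1)
    (fun x _ => (hasDerivAt_id x).sub_const c) hf intervalIntegrable_const hint

lemma abs_integral_sub_mul_le_s17 {f' g : ℝ → ℝ} {p q : ℝ} (c : ℝ) (hpq : p ≤ q)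
    (hint : IntervalIntegrable f' volume p q) (hg : Continuous g)
    (hbd : ∀ x ∈ Icc p q, |f' x| ≤ g x) :
    |∫ x in p..q, (x - c) * f' x| ≤ ∫ x in p..q, |x - c| * g x := by
  have hcont : Continuous fun x : ℝ => |x - c| := by fun_prop
  calc |∫ x in p..q, (x - c) * f' x| ≤ ∫ x in p..q, |(x - c) * f' x| :=
        abs_integral_le_integral_abs hpq
    _ = ∫ x in p..q, |x - c| * |f' x| := integral_congr fun x _ => abs_mul _ _
    _ ≤ ∫ x in p..q, |x - c| * g x :=
        integral_mono_on hpq (hint.abs.continuousOn_mul hcont.continuousOn)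
          ((hcont.mul hg).intervalIntegrable p q) fun x hx =>
          mul_le_mul_of_nonneg_left (hbd x hx) (abs_nonneg _)

lemma integral_sub_mul_affine (p q c α β : ℝ) :
    ∫ x in p..q, (x - c) * (α + β * x) =
      ((α + β * c) * (q - c) ^ 2 / 2 + β * (q - c) ^ 3 / 3) -
        ((α + β * c) * (p - c) ^ 2 / 2 + β * (p - c) ^ 3 / 3) := by
  refine integral_eq_sub_of_hasDerivAt
    (f := fun x => (α + β * c) * (x - c) ^ 2 / 2 + β * (x - c) ^ 3 / 3) (fun x _ => ?_)
    ((by fun_prop : Continuous fun x : ℝ => (x - c) * (α + β * x)).intervalIntegrable _ _)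
  have hsub := (hasDerivAt_id' x).sub_const c
  exact ((((hsub.fun_pow 2).const_mul (α + β * c)).div_const 2).add
    (((hsub.fun_pow 3).const_mul β).div_const 3)).congr_deriv (by norm_num; ring)

lemma integral_abs_sub_mul_affine {p q c : ℝ} (α β : ℝ) (hpc : p ≤ c) (hcq : c ≤ q) :
    ∫ x in p..q, |x - c| * (α + β * x) =
      (α + β * c) * ((c - p) ^ 2 + (q - c) ^ 2) / 2 + β * ((q - c) ^ 3 - (c - p) ^ 3) / 3 := by
  have hint : ∀ u v, IntervalIntegrable (fun x => |x - c| * (α + β * x)) volume u v :=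
    fun u v => (by fun_prop : Continuous _).intervalIntegrable u v
  have hleft : ∫ x in p..c, |x - c| * (α + β * x) = -∫ x in p..c, (x - c) * (α + β * x) := by
    rw [← intervalIntegral.integral_neg]
    refine integral_congr fun x hx => ?_
    rw [uIcc_of_le hpc] at hx
    simp only [abs_of_nonpos (sub_nonpos.mpr hx.2), neg_mul]
  have hright : ∫ x in c..q, |x - c| * (α + β * x) = ∫ x in c..q, (x - c) * (α + β * x) := by
    refine integral_congr fun x hx => ?_
    rw [uIcc_of_le hcq] at hx
    simp only [abs_of_nonneg (sub_nonneg.mpr hx.1)]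
  rw [← integral_add_adjacent_intervals (hint p c) (hint c q), hleft, hright,
    integral_sub_mul_affine, integral_sub_mul_affine]
  ring

lemma simpson_error_eq_integral_peano_kernel {f f' : ℝ → ℝ} {a b : ℝ} (hab : a < b)
    (hf : ∀ x ∈ Icc a b, HasDerivAt f (f' x) x) (hint : IntervalIntegrable f' volume a b) :
    (1 / 6 : ℝ) * (f a + 4 * f ((a + b) / 2) + f b) - (1 / (b - a)) * ∫ x in a..b, f x =
      (1 / (b - a)) * ((∫ x in a..(a + b) / 2, (x - (5 * a + b) / 6) * f' x) +
        ∫ x in (a + b) / 2..b, (x - (a + 5 * b) / 6) * f' x) := by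
  have hm : (a + b) / 2 ∈ uIcc a b := by rw [uIcc_of_le hab.le]; constructor <;> linarith
  have hIcc : uIcc a b = Icc a b := uIcc_of_le hab.le
  have hleft := uIcc_subset_uIcc_left hm
  have hright := uIcc_subset_uIcc_right hm
  have hfc : ContinuousOn f (uIcc a b) :=
    fun x hx => (hf x (hIcc ▸ hx)).continuousAt.continuousWithinAt
  rw [integral_sub_mul_deriv _ (fun x hx => hf x (hIcc ▸ hleft hx)) (hint.mono_set hleft),
    integral_sub_mul_deriv _ (fun x hx => hf x (hIcc ▸ hright hx)) (hint.mono_set hright),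
    ← integral_add_adjacent_intervals ((hfc.mono hleft).intervalIntegrable)
      ((hfc.mono hright).intervalIntegrable)]
  field_simp [(sub_pos.mpr hab).ne']
  ring

theorem stmt17 (f f' : ℝ → ℝ) (a b : ℝ) (hab : a < b)
    (hf : ∀ x ∈ Set.Icc a b, HasDerivAt f (f' x) x)
    (hconv : ∀ x ∈ Set.Icc a b, ∀ y ∈ Set.Icc a b, ∀ t ∈ Set.Icc (0:ℝ) 1,
      |f' ((1 - t) * x + t * y)| ≤ (1 - t) * |f' x| + t * |f' y|) :
    |(1/6 : ℝ) * (f a + 4 * f ((a + b) / 2) + f b) - (1 / (b - a)) * ∫ x in a..b, f x| ≤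
      (5/72) * (b - a) * (|f' a| + |f' b|) := by
  have hba : 0 < b - a := sub_pos.mpr hab
  set α := (b * |f' a| - a * |f' b|) / (b - a) with hα
  set β := (|f' b| - |f' a|) / (b - a) with hβ
  have hbd : ∀ x ∈ Icc a b, |f' x| ≤ α + β * x := fun x hx =>
    (le_chord_of_forall_convexComb_le (φ := fun x => |f' x|) hab
      (hconv a ⟨le_rfl, hab.le⟩ b ⟨hab.le, le_rfl⟩) hx).trans_eq (by rw [hα, hβ]; field_simp; ring)
  have hg : Continuous fun x => α + β * x := by fun_prop
  have hint := intervalIntegrable_of_hasDerivAt_of_abs_le hab.le hf hg.continuousOn hbd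
  have ham : a ≤ (a + b) / 2 := by linarith
  have hmb : (a + b) / 2 ≤ b := by linarith
  have hm : (a + b) / 2 ∈ uIcc a b := by rw [uIcc_of_le hab.le]; exact ⟨ham, hmb⟩
  rw [simpson_error_eq_integral_peano_kernel hab hf hint, abs_mul, abs_of_pos (one_div_pos.mpr hba)]
  calc _ ≤ 1 / (b - a) * ((∫ x in a..(a + b) / 2, |x - (5 * a + b) / 6| * (α + β * x)) +
          ∫ x in (a + b) / 2..b, |x - (a + 5 * b) / 6| * (α + β * x)) := by
        gcongr
        refine (abs_add_le _ _).trans (add_le_add ?_ ?_)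
        · exact abs_integral_sub_mul_le_s17 _ ham (hint.mono_set (uIcc_subset_uIcc_left hm)) hg
            fun x hx => hbd x (Icc_subset_Icc_right hmb hx)
        · exact abs_integral_sub_mul_le_s17 _ hmb (hint.mono_set (uIcc_subset_uIcc_right hm)) hg
            fun x hx => hbd x (Icc_subset_Icc_left ham hx)
    _ = _ := by
        rw [integral_abs_sub_mul_affine _ _ (by linarith) (by linarith),
          integral_abs_sub_mul_affine _ _ (by linarith) (by linarith), hα, hβ]
        field_simp
        ring
end
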